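/- Let k > 4 be an integer and let X₁, X₂, U₁, U₂, U₃ ⊆ ℝ³ be the sets of Example 1, so that X₁ = U₁ ∪ U₂ ∪ U₃. Define φ on X₁ by φ(p) = p for p ∈ U₁, φ(x,y,t) = (x, y−t/2, t) for (x,y,t) ∈ U₂, and φ(x,y,t) = (x−2t, y+t/2, t) for (x,y,t) ∈ U₃. Then there exist ε > 0 and λ ≥ 1 such that φ is a well-defined bijection from X₁ ∩ {0 ≤ t ≤ ε} onto X₂ ∩ {0 ≤ t ≤ ε} satisfying λ⁻¹·‖p−q‖ ≤ ‖φ(p)−φ(q)‖ ≤ λ·‖p−q‖ for all p, q ∈ X₁ ∩ {0 ≤ t ≤ ε}. -/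

import Mathlib

/-!
Identify the horizontal plane with `ℂ`. The cones `U₂, U₃` and their images `V₂, V₃` lie over
circles of radius `t/4` about `t c` with `c = 1 ± i/2, 1, -1`, and on `U₂, U₃` the map `φ` is a
shear `(z, t) ↦ (z + t w, t)`, hence bi-Lipschitz. The factors `F, G = (x ∓ t)² + y² - t²` of the
equation `F G = t^k` of `U₁` have nonnegative sum, so both are nonnegative: `U₁` lies outside the
discs of radius `t` about `±t`, which contain the cones with a margin of order `t`. Hence any two
distinct pieces, of `X₁` or of `X₂`, are at distance `≳ t_p + t_q` from each other. As every point
of these pieces has norm `≲ t` (for `U₁` this uses `t^k ≤ t^4` when `t ≤ 1`), for `p, q` in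
different pieces both `‖p - q‖` and `‖φ p - φ q‖` are comparable to `t_p + t_q`.
-/

open Set Metric

noncomputable section

/-- The surface `X₁` of Example 1 in `ℝ³` (coordinates `x = p 0`, `y = p 1`, `t = p 2`). -/
def ExampleX1 (k : ℕ) : Set (EuclideanSpace ℝ (Fin 3)) :=
  {p | ((p 0 ^ 2 - 2 * p 0 * p 2 + p 1 ^ 2) * (p 0 ^ 2 + 2 * p 0 * p 2 + p 1 ^ 2) - p 2 ^ k) *
        ((p 0 - p 2) ^ 2 + (p 1 - p 2 / 2) ^ 2 - p 2 ^ 2 / 16) *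
        ((p 0 - p 2) ^ 2 + (p 1 + p 2 / 2) ^ 2 - p 2 ^ 2 / 16) = 0 ∧ 0 ≤ p 2}

/-- The surface `X₂` of Example 1 in `ℝ³`. -/
def ExampleX2 (k : ℕ) : Set (EuclideanSpace ℝ (Fin 3)) :=
  {p | ((p 0 ^ 2 - 2 * p 0 * p 2 + p 1 ^ 2) * (p 0 ^ 2 + 2 * p 0 * p 2 + p 1 ^ 2) - p 2 ^ k) *
        ((p 0 - p 2) ^ 2 + p 1 ^ 2 - p 2 ^ 2 / 16) *
        ((p 0 + p 2) ^ 2 + p 1 ^ 2 - p 2 ^ 2 / 16) = 0 ∧ 0 ≤ p 2}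

/-- The piece `U₁` of Example 1 (coordinates `x = p 0`, `y = p 1`, `t = p 2`). -/
def PieceU1 (k : ℕ) : Set (EuclideanSpace ℝ (Fin 3)) :=
  {p | ((p 0 - p 2) ^ 2 + p 1 ^ 2 - p 2 ^ 2) * ((p 0 + p 2) ^ 2 + p 1 ^ 2 - p 2 ^ 2) = p 2 ^ k ∧
        0 ≤ p 2}

/-- The cone `U₂` over the circle `(x-1)² + (y-1/2)² = 1/16`. -/
def PieceU2 : Set (EuclideanSpace ℝ (Fin 3)) :=
  {p | (p 0 - p 2) ^ 2 + (p 1 - p 2 / 2) ^ 2 = p 2 ^ 2 / 16 ∧ 0 ≤ p 2}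

/-- The cone `U₃` over the circle `(x-1)² + (y+1/2)² = 1/16`. -/
def PieceU3 : Set (EuclideanSpace ℝ (Fin 3)) :=
  {p | (p 0 - p 2) ^ 2 + (p 1 + p 2 / 2) ^ 2 = p 2 ^ 2 / 16 ∧ 0 ≤ p 2}

/-- The cone `V₂` over the circle `(x-1)² + y² = 1/16`. -/
def PieceV2 : Set (EuclideanSpace ℝ (Fin 3)) :=
  {p | (p 0 - p 2) ^ 2 + p 1 ^ 2 = p 2 ^ 2 / 16 ∧ 0 ≤ p 2}

/-- The cone `V₃` over the circle `(x+1)² + y² = 1/16`. -/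
def PieceV3 : Set (EuclideanSpace ℝ (Fin 3)) :=
  {p | (p 0 + p 2) ^ 2 + p 1 ^ 2 = p 2 ^ 2 / 16 ∧ 0 ≤ p 2}

local notation "ℝ³" => EuclideanSpace ℝ (Fin 3)

namespace Example1

section glue

variable {E ι : Type*} [SeminormedAddCommGroup E] [LinearOrder ι]

lemma norm_sub_le_of_norm_le_mul {x y : E} {a b c d : ℝ} (hc : 0 ≤ c) (hx : ‖x‖ ≤ c * a)
    (hy : ‖y‖ ≤ c * b) (hab : a + b ≤ d) : ‖x - y‖ ≤ c * d :=
  calc ‖x - y‖ ≤ ‖x‖ + ‖y‖ := norm_sub_le x y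
    _ ≤ c * (a + b) := by linarith
    _ ≤ c * d := mul_le_mul_of_nonneg_left hab hc

theorem biLipschitz_of_separated_pieces {A : ι → Set E} {f : E → E} {τ : E → ℝ} {L c s : ℝ}
    (hc : 0 ≤ c)
    (hpiece : ∀ i, ∀ p ∈ A i, ∀ q ∈ A i,
      ‖f p - f q‖ ≤ L * ‖p - q‖ ∧ ‖p - q‖ ≤ L * ‖f p - f q‖)
    (hnorm : ∀ i, ∀ p ∈ A i, ‖p‖ ≤ c * τ p ∧ ‖f p‖ ≤ c * τ p)
    (hsep : ∀ i j, i < j → ∀ p ∈ A i, ∀ q ∈ A j,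
      τ p + τ q ≤ s * ‖p - q‖ ∧ τ p + τ q ≤ s * ‖f p - f q‖)
    {i j : ι} {p q : E} (hp : p ∈ A i) (hq : q ∈ A j) :
    ‖f p - f q‖ ≤ max L (c * s) * ‖p - q‖ ∧ ‖p - q‖ ≤ max L (c * s) * ‖f p - f q‖ := by
  have weaken : ∀ {K : ℝ} {x y : E}, K ≤ max L (c * s) →
      ‖f x - f y‖ ≤ K * ‖x - y‖ ∧ ‖x - y‖ ≤ K * ‖f x - f y‖ →
      ‖f x - f y‖ ≤ max L (c * s) * ‖x - y‖ ∧ ‖x - y‖ ≤ max L (c * s) * ‖f x - f y‖ :=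
    fun hK h => ⟨h.1.trans (mul_le_mul_of_nonneg_right hK (norm_nonneg _)),
      h.2.trans (mul_le_mul_of_nonneg_right hK (norm_nonneg _))⟩
  have cross : ∀ {i j : ι} {x y : E}, i < j → x ∈ A i → y ∈ A j →
      ‖f x - f y‖ ≤ c * s * ‖x - y‖ ∧ ‖x - y‖ ≤ c * s * ‖f x - f y‖ := by
    intro i j x y hij hx hy
    obtain ⟨hsep₁, hsep₂⟩ := hsep i j hij x hx y hy
    rw [mul_assoc, mul_assoc]
    exact ⟨norm_sub_le_of_norm_le_mul hc (hnorm i x hx).2 (hnorm j y hy).2 hsep₁,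
      norm_sub_le_of_norm_le_mul hc (hnorm i x hx).1 (hnorm j y hy).1 hsep₂⟩
  rcases lt_trichotomy i j with hij | rfl | hji
  · exact weaken (le_max_right _ _) (cross hij hp hq)
  · exact weaken (le_max_left _ _) (hpiece i p hp q hq)
  · rw [norm_sub_rev p, norm_sub_rev (f p)]
    exact weaken (le_max_right _ _) (cross hji hq hp)

end glue

def planar (p : ℝ³) : ℂ := ⟨p 0, p 1⟩

@[simp] lemma planar_re (p : ℝ³) : (planar p).re = p 0 := rfl

@[simp] lemma planar_im (p : ℝ³) : (planar p).im = p 1 := rfl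

@[simp] lemma planar_sub (p q : ℝ³) : planar (p - q) = planar p - planar q := rfl

lemma ext_planar {p q : ℝ³} (h : planar p = planar q) (h2 : p 2 = q 2) : p = q := by
  rw [Complex.ext_iff] at h
  ext i
  fin_cases i
  exacts [h.1, h.2, h2]

lemma sq_norm_planar_sub (p : ℝ³) (c : ℂ) :
    ‖planar p - p 2 * c‖ ^ 2 = (p 0 - p 2 * c.re) ^ 2 + (p 1 - p 2 * c.im) ^ 2 := by
  rw [Complex.sq_norm, Complex.normSq_apply]
  simp only [Complex.sub_re, Complex.sub_im, Complex.re_ofReal_mul, Complex.im_ofReal_mul,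
    planar_re, planar_im]
  ring

lemma sq_norm_eq (p : ℝ³) : ‖p‖ ^ 2 = ‖planar p‖ ^ 2 + p 2 ^ 2 := by
  rw [EuclideanSpace.norm_sq_eq, Fin.sum_univ_three, Complex.sq_norm, Complex.normSq_apply]
  simp only [Real.norm_eq_abs, sq_abs, planar_re, planar_im]
  ring

lemma norm_planar_le (p : ℝ³) : ‖planar p‖ ≤ ‖p‖ :=
  (sq_le_sq₀ (norm_nonneg _) (norm_nonneg _)).mp (by nlinarith [sq_norm_eq p])

lemma abs_two_le_norm (p : ℝ³) : |p 2| ≤ ‖p‖ := by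
  rw [← abs_norm p]
  exact sq_le_sq.mp (by nlinarith [sq_norm_eq p, sq_nonneg ‖planar p‖])

lemma norm_le_of_norm_planar_le {p : ℝ³} (h2 : 0 ≤ p 2) (h : ‖planar p‖ ≤ 5 / 2 * p 2) :
    ‖p‖ ≤ 3 * p 2 :=
  (sq_le_sq₀ (norm_nonneg _) (by positivity)).mp
    (by nlinarith [sq_norm_eq p, norm_nonneg (planar p)])

lemma norm_planar_sub_le (c : ℂ) (p q : ℝ³) :
    ‖planar p - p 2 * c‖ ≤ ‖planar q - q 2 * c‖ + (1 + ‖c‖) * ‖p - q‖ := by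
  have hsplit : planar p - p 2 * c =
      (planar q - q 2 * c) + (planar (p - q) - ((p - q) 2 : ℝ) * c) := by
    simp only [planar_sub, PiLp.sub_apply, Complex.ofReal_sub]
    ring
  have hdiff : ‖planar (p - q) - ((p - q) 2 : ℝ) * c‖ ≤ (1 + ‖c‖) * ‖p - q‖ := by
    calc ‖planar (p - q) - ((p - q) 2 : ℝ) * c‖
        ≤ ‖planar (p - q)‖ + ‖(((p - q) 2 : ℝ) : ℂ) * c‖ := norm_sub_le _ _
      _ = ‖planar (p - q)‖ + |(p - q) 2| * ‖c‖ := by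
          rw [norm_mul, Complex.norm_real, Real.norm_eq_abs]
      _ ≤ ‖p - q‖ + ‖p - q‖ * ‖c‖ := by
          gcongr
          exacts [norm_planar_le _, abs_two_le_norm _]
      _ = (1 + ‖c‖) * ‖p - q‖ := by ring
  rw [hsplit]
  exact (norm_add_le _ _).trans (by linarith)

/-- `x ↦ ‖planar x - x 2 * c‖` is `(1 + ‖c‖)`-Lipschitz (`norm_planar_sub_le`), so it cannot pass
from `≥ r * p 2` to `≤ r' * q 2` over a distance small compared with `p 2 + q 2`. -/
lemma sub_mul_add_le_of_separated_by_cone {c : ℂ} {r r' : ℝ} {p q : ℝ³} (hr' : 0 ≤ r') (hrr : r' ≤ r)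
    (hp : r * p 2 ≤ ‖planar p - p 2 * c‖) (hq : ‖planar q - q 2 * c‖ ≤ r' * q 2) :
    (r - r') * (p 2 + q 2) ≤ (2 + 2 * ‖c‖ + r + r') * ‖p - q‖ := by
  have hpq := abs_le.mp (abs_two_le_norm (p - q))
  simp only [PiLp.sub_apply] at hpq
  have hlip := norm_planar_sub_le c p q
  have h1 : r * (q 2 - p 2) ≤ r * ‖p - q‖ := mul_le_mul_of_nonneg_left (by linarith) (by linarith)
  have h2 : r' * (q 2 - p 2) ≤ r' * ‖p - q‖ := mul_le_mul_of_nonneg_left (by linarith) hr'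
  linarith

def coneOver (c : ℂ) : Set ℝ³ := {p | ‖planar p - p 2 * c‖ = p 2 / 4}

lemma mem_coneOver_iff {c : ℂ} {p : ℝ³} : p ∈ coneOver c ↔
    (p 0 - p 2 * c.re) ^ 2 + (p 1 - p 2 * c.im) ^ 2 = p 2 ^ 2 / 16 ∧ 0 ≤ p 2 := by
  rw [coneOver, mem_ofPred_eq, ← sq_norm_planar_sub]
  constructor
  · intro h
    refine ⟨by rw [h]; ring, ?_⟩
    linarith [h ▸ norm_nonneg (planar p - p 2 * c)]
  · rintro ⟨h, h2⟩
    exact (pow_left_inj₀ (norm_nonneg _) (by positivity) two_ne_zero).mp (by rw [h]; ring)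

lemma pieceU2_eq : PieceU2 = coneOver (1 + Complex.I / 2) := by
  ext p
  simp only [PieceU2, mem_ofPred_eq, mem_coneOver_iff, Complex.add_re, Complex.add_im,
    Complex.one_re, Complex.one_im, Complex.div_ofNat_re, Complex.div_ofNat_im, Complex.I_re,
    Complex.I_im]
  ring_nf

lemma pieceU3_eq : PieceU3 = coneOver (1 - Complex.I / 2) := by
  ext p
  simp only [PieceU3, mem_ofPred_eq, mem_coneOver_iff, Complex.sub_re, Complex.sub_im,
    Complex.one_re, Complex.one_im, Complex.div_ofNat_re, Complex.div_ofNat_im, Complex.I_re,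
    Complex.I_im]
  ring_nf

lemma pieceV2_eq : PieceV2 = coneOver 1 := by
  ext p
  rw [mem_coneOver_iff]
  simp [PieceV2]

lemma pieceV3_eq : PieceV3 = coneOver (-1) := by
  ext p
  rw [mem_coneOver_iff]
  simp [PieceV3]

section coneOver

variable {c c' : ℂ} {p q : ℝ³}

lemma coord_two_nonneg_of_mem_coneOver (hp : p ∈ coneOver c) : 0 ≤ p 2 :=
  (mem_coneOver_iff.mp hp).2

lemma norm_planar_sub_eq_of_mem_coneOver (hp : p ∈ coneOver c) (c' : ℂ) :
    ‖planar p - p 2 * c' - p 2 * (c - c')‖ = p 2 / 4 := by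
  rw [← hp]
  ring_nf

lemma norm_planar_sub_le_of_mem_coneOver (hp : p ∈ coneOver c) (c' : ℂ) :
    ‖planar p - p 2 * c'‖ ≤ (1 / 4 + ‖c - c'‖) * p 2 := by
  have h2 := coord_two_nonneg_of_mem_coneOver hp
  have h := norm_sub_norm_le (planar p - p 2 * c') (p 2 * (c - c'))
  rw [norm_planar_sub_eq_of_mem_coneOver hp, norm_mul, Complex.norm_real,
    Real.norm_of_nonneg h2] at h
  linarith

lemma le_norm_planar_sub_of_mem_coneOver (hp : p ∈ coneOver c) (c' : ℂ) :
    (‖c - c'‖ - 1 / 4) * p 2 ≤ ‖planar p - p 2 * c'‖ := by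
  have h2 := coord_two_nonneg_of_mem_coneOver hp
  have h := norm_sub_norm_le (p 2 * (c - c')) (planar p - p 2 * c')
  rw [norm_sub_rev (_ * _), norm_planar_sub_eq_of_mem_coneOver hp, norm_mul, Complex.norm_real,
    Real.norm_of_nonneg h2] at h
  linarith

lemma norm_le_of_mem_coneOver (hc : ‖c‖ ≤ 2) (hp : p ∈ coneOver c) : ‖p‖ ≤ 3 * p 2 := by
  have h2 := coord_two_nonneg_of_mem_coneOver hp
  have h := norm_planar_sub_le_of_mem_coneOver hp 0
  simp only [mul_zero, sub_zero] at h
  exact norm_le_of_norm_planar_le h2 (h.trans (by nlinarith))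

lemma add_le_of_mem_coneOver (hcc : 1 ≤ ‖c - c'‖) (hc' : ‖c'‖ ≤ 2) (hp : p ∈ coneOver c)
    (hq : q ∈ coneOver c') : p 2 + q 2 ≤ 24 * ‖p - q‖ := by
  have hp2 := coord_two_nonneg_of_mem_coneOver hp
  have hq2 := coord_two_nonneg_of_mem_coneOver hq
  have hout : 3 / 4 * p 2 ≤ ‖planar p - p 2 * c'‖ :=
    (by nlinarith : 3 / 4 * p 2 ≤ (‖c - c'‖ - 1 / 4) * p 2).trans
      (le_norm_planar_sub_of_mem_coneOver hp c')
  have hin : ‖planar q - q 2 * c'‖ ≤ 1 / 4 * q 2 := by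
    simpa using norm_planar_sub_le_of_mem_coneOver hq c'
  have h := sub_mul_add_le_of_separated_by_cone (by norm_num) (by norm_num) hout hin
  nlinarith [norm_nonneg (p - q)]

end coneOver

section pieceU1

variable {k : ℕ} {p q : ℝ³}

/-- `U₁` lies outside both discs of radius `t` about `(±t, 0)`: the factors
`(x ∓ t)² + y² - t²` of `t ^ k ≥ 0` have nonnegative sum `2 (x² + y²)`, so neither is negative. -/
lemma coord_two_le_norm_planar_sub_of_mem_pieceU1 {σ : ℂ} (hσ : σ = 1 ∨ σ = -1)
    (hp : p ∈ PieceU1 k) : p 2 ≤ ‖planar p - p 2 * σ‖ := by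
  obtain ⟨h, h2⟩ := hp
  have hprod := h ▸ pow_nonneg h2 k
  have hF : 0 ≤ (p 0 - p 2) ^ 2 + p 1 ^ 2 - p 2 ^ 2 := by
    nlinarith [sq_nonneg (p 0), sq_nonneg (p 1)]
  have hG : 0 ≤ (p 0 + p 2) ^ 2 + p 1 ^ 2 - p 2 ^ 2 := by
    nlinarith [sq_nonneg (p 0), sq_nonneg (p 1)]
  refine (sq_le_sq₀ h2 (norm_nonneg _)).mp ?_
  rw [sq_norm_planar_sub]
  rcases hσ with rfl | rfl <;> simp <;> linarith

lemma norm_le_of_mem_pieceU1 (hk : 4 ≤ k) (hp : p ∈ PieceU1 k) (h1 : p 2 ≤ 1) :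
    ‖p‖ ≤ 3 * p 2 := by
  obtain ⟨h, h2⟩ := hp
  have hk4 : p 2 ^ k ≤ p 2 ^ 4 := pow_le_pow_of_le_one h2 h1 hk
  have hr : p 0 ^ 2 + p 1 ^ 2 ≤ 5 * p 2 ^ 2 := by
    nlinarith [sq_nonneg (p 1), sq_nonneg (p 2), mul_nonneg (sq_nonneg (p 1)) (sq_nonneg (p 2))]
  refine norm_le_of_norm_planar_le h2 ((sq_le_sq₀ (norm_nonneg _) (by positivity)).mp ?_)
  have := sq_norm_planar_sub p 0
  simp only [mul_zero, sub_zero, Complex.zero_re, Complex.zero_im] at this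
  nlinarith

lemma add_le_of_mem_pieceU1_of_mem_coneOver {σ c : ℂ} (hσ : σ = 1 ∨ σ = -1)
    (hc : ‖c - σ‖ ≤ 1 / 2) (hp : p ∈ PieceU1 k) (hq : q ∈ coneOver c) :
    p 2 + q 2 ≤ 24 * ‖p - q‖ := by
  have hσ1 : ‖σ‖ = 1 := by rcases hσ with rfl | rfl <;> simp
  have hq2 := coord_two_nonneg_of_mem_coneOver hq
  have hout : 1 * p 2 ≤ ‖planar p - p 2 * σ‖ := by
    simpa using coord_two_le_norm_planar_sub_of_mem_pieceU1 hσ hp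
  have hin : ‖planar q - q 2 * σ‖ ≤ 3 / 4 * q 2 :=
    (norm_planar_sub_le_of_mem_coneOver hq σ).trans (by nlinarith)
  have h := sub_mul_add_le_of_separated_by_cone (by norm_num) (by norm_num) hout hin
  rw [hσ1] at h
  nlinarith [norm_nonneg (p - q)]

end pieceU1

def shear (w : ℂ) (p : ℝ³) : ℝ³ := !₂[p 0 + p 2 * w.re, p 1 + p 2 * w.im, p 2]

section shear

variable {w : ℂ} {p q : ℝ³}

lemma shear_apply_zero : shear w p 0 = p 0 + p 2 * w.re := rfl

lemma shear_apply_one : shear w p 1 = p 1 + p 2 * w.im := rfl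

@[simp] lemma shear_apply_two : shear w p 2 = p 2 := rfl

@[simp] lemma planar_shear : planar (shear w p) = planar p + p 2 * w := by
  apply Complex.ext <;> simp [shear, planar]

lemma shear_sub : shear w p - shear w q = shear w (p - q) :=
  ext_planar (by simp only [planar_sub, planar_shear, PiLp.sub_apply]; push_cast; ring) rfl

lemma shear_neg_shear : shear (-w) (shear w p) = p :=
  ext_planar (by simp) rfl

lemma shear_shear_neg : shear w (shear (-w) p) = p :=
  ext_planar (by simp) rfl

lemma shear_of_coord_two_eq_zero (h : p 2 = 0) : shear w p = p :=
  ext_planar (by simp [h]) rfl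

lemma norm_shear_le : ‖shear w p‖ ≤ (1 + ‖w‖) * ‖p‖ := by
  have hplanar : ‖planar (shear w p)‖ ≤ ‖planar p‖ + |p 2| * ‖w‖ := by
    rw [planar_shear]
    refine (norm_add_le _ _).trans_eq ?_
    rw [norm_mul, Complex.norm_real, Real.norm_eq_abs]
  have ha := norm_planar_le p
  have hb := abs_two_le_norm p
  have hN := sq_norm_eq p
  refine (sq_le_sq₀ (norm_nonneg _) (by positivity)).mp ?_
  rw [sq_norm_eq, shear_apply_two, ← sq_abs (p 2)]
  have hw := norm_nonneg w
  have hpw := norm_nonneg (planar (shear w p))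
  rw [← sq_abs (p 2)] at hN
  nlinarith [mul_nonneg hw (sq_nonneg (‖planar p‖ - |p 2|)), mul_nonneg (mul_nonneg hw hw)
    (sq_nonneg ‖planar p‖), abs_nonneg (p 2), norm_nonneg (planar p)]

lemma norm_shear_sub_shear_le : ‖shear w p - shear w q‖ ≤ (1 + ‖w‖) * ‖p - q‖ := by
  rw [shear_sub]
  exact norm_shear_le

lemma norm_sub_le_norm_shear_sub_shear : ‖p - q‖ ≤ (1 + ‖w‖) * ‖shear w p - shear w q‖ := by
  simpa [shear_neg_shear] using norm_shear_sub_shear_le (w := -w) (p := shear w p) (q := shear w q)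

lemma shear_mem_coneOver {c : ℂ} (hp : p ∈ coneOver c) : shear w p ∈ coneOver (c + w) := by
  rw [coneOver, mem_ofPred_eq, planar_shear, shear_apply_two, ← hp]
  ring_nf

lemma shear_biLipschitz {w : ℂ} (hw : ‖w‖ ≤ 3) (p q : ℝ³) :
    ‖shear w p - shear w q‖ ≤ 4 * ‖p - q‖ ∧ ‖p - q‖ ≤ 4 * ‖shear w p - shear w q‖ := by
  have h4 : 1 + ‖w‖ ≤ 4 := by linarith
  exact ⟨norm_shear_sub_shear_le.trans (mul_le_mul_of_nonneg_right h4 (norm_nonneg _)),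
    norm_sub_le_norm_shear_sub_shear.trans (mul_le_mul_of_nonneg_right h4 (norm_nonneg _))⟩

end shear

lemma quartic_factor_eq (x y t : ℝ) :
    (x ^ 2 - 2 * x * t + y ^ 2) * (x ^ 2 + 2 * x * t + y ^ 2) =
      ((x - t) ^ 2 + y ^ 2 - t ^ 2) * ((x + t) ^ 2 + y ^ 2 - t ^ 2) := by
  ring

lemma exampleX1_eq (k : ℕ) : ExampleX1 k = PieceU1 k ∪ PieceU2 ∪ PieceU3 := by
  ext p
  simp only [ExampleX1, PieceU1, PieceU2, PieceU3, mem_union, mem_ofPred_eq, mul_eq_zero,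
    sub_eq_zero, quartic_factor_eq]
  tauto

lemma exampleX2_eq (k : ℕ) : ExampleX2 k = PieceU1 k ∪ PieceV2 ∪ PieceV3 := by
  ext p
  simp only [ExampleX2, PieceU1, PieceV2, PieceV3, mem_union, mem_ofPred_eq, mul_eq_zero,
    sub_eq_zero, quartic_factor_eq]
  tauto

section namedPieces

variable {k : ℕ} {p q : ℝ³}

lemma add_le_of_mem_pieceU1_of_mem_pieceU2 (hp : p ∈ PieceU1 k) (hq : q ∈ PieceU2) :
    p 2 + q 2 ≤ 24 * ‖p - q‖ :=
  add_le_of_mem_pieceU1_of_mem_coneOver (Or.inl rfl) (by simp) hp (pieceU2_eq ▸ hq)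

lemma add_le_of_mem_pieceU1_of_mem_pieceU3 (hp : p ∈ PieceU1 k) (hq : q ∈ PieceU3) :
    p 2 + q 2 ≤ 24 * ‖p - q‖ :=
  add_le_of_mem_pieceU1_of_mem_coneOver (Or.inl rfl) (by simp) hp (pieceU3_eq ▸ hq)

lemma add_le_of_mem_pieceU1_of_mem_pieceV2 (hp : p ∈ PieceU1 k) (hq : q ∈ PieceV2) :
    p 2 + q 2 ≤ 24 * ‖p - q‖ :=
  add_le_of_mem_pieceU1_of_mem_coneOver (Or.inl rfl) (by simp) hp (pieceV2_eq ▸ hq)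

lemma add_le_of_mem_pieceU1_of_mem_pieceV3 (hp : p ∈ PieceU1 k) (hq : q ∈ PieceV3) :
    p 2 + q 2 ≤ 24 * ‖p - q‖ :=
  add_le_of_mem_pieceU1_of_mem_coneOver (Or.inr rfl) (by simp) hp (pieceV3_eq ▸ hq)

lemma add_le_of_mem_pieceU2_of_mem_pieceU3 (hp : p ∈ PieceU2) (hq : q ∈ PieceU3) :
    p 2 + q 2 ≤ 24 * ‖p - q‖ :=
  add_le_of_mem_coneOver (by ring_nf; simp) ((norm_sub_le _ _).trans (by norm_num))
    (pieceU2_eq ▸ hp) (pieceU3_eq ▸ hq)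

lemma add_le_of_mem_pieceV2_of_mem_pieceV3 (hp : p ∈ PieceV2) (hq : q ∈ PieceV3) :
    p 2 + q 2 ≤ 24 * ‖p - q‖ :=
  add_le_of_mem_coneOver (by norm_num) (by simp) (pieceV2_eq ▸ hp) (pieceV3_eq ▸ hq)

lemma norm_le_of_mem_pieceU2 (hp : p ∈ PieceU2) : ‖p‖ ≤ 3 * p 2 :=
  norm_le_of_mem_coneOver ((norm_add_le _ _).trans (by norm_num)) (pieceU2_eq ▸ hp)

lemma norm_le_of_mem_pieceU3 (hp : p ∈ PieceU3) : ‖p‖ ≤ 3 * p 2 :=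
  norm_le_of_mem_coneOver ((norm_sub_le _ _).trans (by norm_num)) (pieceU3_eq ▸ hp)

lemma norm_le_of_mem_pieceV2 (hp : p ∈ PieceV2) : ‖p‖ ≤ 3 * p 2 :=
  norm_le_of_mem_coneOver (by simp) (pieceV2_eq ▸ hp)

lemma norm_le_of_mem_pieceV3 (hp : p ∈ PieceV3) : ‖p‖ ≤ 3 * p 2 :=
  norm_le_of_mem_coneOver (by simp) (pieceV3_eq ▸ hp)

lemma coord_two_eq_zero_of_add_self_le {s : ℝ} (h2 : 0 ≤ p 2) (h : p 2 + p 2 ≤ s * ‖p - p‖) :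
    p 2 = 0 := by
  rw [sub_self, norm_zero] at h
  linarith

end namedPieces

open Classical in
def phi (p : ℝ³) : ℝ³ :=
  if p ∈ PieceU2 then shear (-Complex.I / 2) p
  else if p ∈ PieceU3 then shear (-2 + Complex.I / 2) p
  else p

section phi

variable {k : ℕ} {p : ℝ³}

@[simp] lemma phi_apply_two : phi p 2 = p 2 := by
  unfold phi
  split_ifs <;> rfl

lemma phi_of_mem_pieceU1 (hp : p ∈ PieceU1 k) : phi p = p := by
  unfold phi
  split_ifs with h2 h3
  · exact shear_of_coord_two_eq_zero
      (coord_two_eq_zero_of_add_self_le hp.2 (add_le_of_mem_pieceU1_of_mem_pieceU2 hp h2))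
  · exact shear_of_coord_two_eq_zero
      (coord_two_eq_zero_of_add_self_le hp.2 (add_le_of_mem_pieceU1_of_mem_pieceU3 hp h3))
  · rfl

lemma phi_of_mem_pieceU2 (hp : p ∈ PieceU2) : phi p = shear (-Complex.I / 2) p :=
  if_pos hp

lemma phi_of_mem_pieceU3 (hp : p ∈ PieceU3) : phi p = shear (-2 + Complex.I / 2) p := by
  unfold phi
  split_ifs with h2
  · have h0 := coord_two_eq_zero_of_add_self_le hp.2 (add_le_of_mem_pieceU2_of_mem_pieceU3 h2 hp)
    rw [shear_of_coord_two_eq_zero h0, shear_of_coord_two_eq_zero h0]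
  · rfl

lemma phi_apply_of_mem_pieceU2 (hp : p ∈ PieceU2) :
    phi p 0 = p 0 ∧ phi p 1 = p 1 - p 2 / 2 ∧ phi p 2 = p 2 := by
  have hw : (-Complex.I / 2).re = 0 ∧ (-Complex.I / 2).im = -1 / 2 := by norm_num
  rw [phi_of_mem_pieceU2 hp, shear_apply_zero, shear_apply_one, hw.1, hw.2]
  exact ⟨by ring, by ring, rfl⟩

lemma phi_apply_of_mem_pieceU3 (hp : p ∈ PieceU3) :
    phi p 0 = p 0 - 2 * p 2 ∧ phi p 1 = p 1 + p 2 / 2 ∧ phi p 2 = p 2 := by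
  have hw : (-2 + Complex.I / 2).re = -2 ∧ (-2 + Complex.I / 2).im = 1 / 2 := by norm_num
  rw [phi_of_mem_pieceU3 hp, shear_apply_zero, shear_apply_one, hw.1, hw.2]
  exact ⟨by ring, by ring, rfl⟩

lemma phi_mem_pieceV2 (hp : p ∈ PieceU2) : phi p ∈ PieceV2 := by
  rw [phi_of_mem_pieceU2 hp, pieceV2_eq]
  convert shear_mem_coneOver (w := -Complex.I / 2) (pieceU2_eq ▸ hp) using 2
  ring

lemma phi_mem_pieceV3 (hp : p ∈ PieceU3) : phi p ∈ PieceV3 := by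
  rw [phi_of_mem_pieceU3 hp, pieceV3_eq]
  convert shear_mem_coneOver (w := -2 + Complex.I / 2) (pieceU3_eq ▸ hp) using 2
  ring

lemma phi_mem_exampleX2 (hp : p ∈ ExampleX1 k) : phi p ∈ ExampleX2 k := by
  rw [exampleX1_eq] at hp
  rw [exampleX2_eq]
  rcases hp with (h1 | h2) | h3
  · exact Or.inl (Or.inl ((phi_of_mem_pieceU1 h1).symm ▸ h1))
  · exact Or.inl (Or.inr (phi_mem_pieceV2 h2))
  · exact Or.inr (phi_mem_pieceV3 h3)

lemma exists_phi_eq {q : ℝ³} (hq : q ∈ ExampleX2 k) : ∃ p ∈ ExampleX1 k, phi p = q := by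
  rw [exampleX2_eq] at hq
  rw [exampleX1_eq]
  rcases hq with (h1 | h2) | h3
  · exact ⟨q, Or.inl (Or.inl h1), phi_of_mem_pieceU1 h1⟩
  · have hp : shear (Complex.I / 2) q ∈ PieceU2 := by
      rw [pieceU2_eq]
      convert shear_mem_coneOver (w := Complex.I / 2) (pieceV2_eq ▸ h2) using 2
    refine ⟨_, Or.inl (Or.inr hp), ?_⟩
    rw [phi_of_mem_pieceU2 hp, neg_div, shear_neg_shear]
  · have hp : shear (2 - Complex.I / 2) q ∈ PieceU3 := by
      rw [pieceU3_eq]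
      convert shear_mem_coneOver (w := 2 - Complex.I / 2) (pieceV3_eq ▸ h3) using 2
      ring
    refine ⟨_, Or.inr hp, ?_⟩
    rw [phi_of_mem_pieceU3 hp, show -2 + Complex.I / 2 = -(2 - Complex.I / 2) by ring,
      shear_neg_shear]

end phi

def pieces (k : ℕ) : Fin 3 → Set ℝ³ := ![PieceU1 k ∩ {x | x 2 ≤ 1}, PieceU2, PieceU3]

section pieces

variable {k : ℕ} {i j : Fin 3} {p q : ℝ³}

lemma exists_mem_pieces (hp : p ∈ ExampleX1 k) (hp1 : p 2 ≤ 1) : ∃ i, p ∈ pieces k i := by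
  rw [exampleX1_eq] at hp
  rcases hp with (h1 | h2) | h3
  exacts [⟨0, h1, hp1⟩, ⟨1, h2⟩, ⟨2, h3⟩]

lemma phi_biLipschitz_of_mem_pieces (hp : p ∈ pieces k i) (hq : q ∈ pieces k i) :
    ‖phi p - phi q‖ ≤ 4 * ‖p - q‖ ∧ ‖p - q‖ ≤ 4 * ‖phi p - phi q‖ := by
  fin_cases i
  · rw [phi_of_mem_pieceU1 hp.1, phi_of_mem_pieceU1 hq.1]
    constructor <;> linarith [norm_nonneg (p - q)]
  · rw [phi_of_mem_pieceU2 hp, phi_of_mem_pieceU2 hq]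
    exact shear_biLipschitz (by norm_num) p q
  · rw [phi_of_mem_pieceU3 hp, phi_of_mem_pieceU3 hq]
    exact shear_biLipschitz ((norm_add_le _ _).trans (by norm_num)) p q

lemma norm_le_of_mem_pieces (hk : 4 ≤ k) (hp : p ∈ pieces k i) :
    ‖p‖ ≤ 3 * p 2 ∧ ‖phi p‖ ≤ 3 * p 2 := by
  fin_cases i
  · rw [phi_of_mem_pieceU1 hp.1, and_self]
    exact norm_le_of_mem_pieceU1 hk hp.1 hp.2
  · exact ⟨norm_le_of_mem_pieceU2 hp, by simpa using norm_le_of_mem_pieceV2 (phi_mem_pieceV2 hp)⟩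
  · exact ⟨norm_le_of_mem_pieceU3 hp, by simpa using norm_le_of_mem_pieceV3 (phi_mem_pieceV3 hp)⟩

lemma add_le_of_mem_pieces (hij : i < j) (hp : p ∈ pieces k i) (hq : q ∈ pieces k j) :
    p 2 + q 2 ≤ 24 * ‖p - q‖ ∧ p 2 + q 2 ≤ 24 * ‖phi p - phi q‖ := by
  fin_cases i <;> fin_cases j <;> try exact absurd hij (by decide)
  · refine ⟨add_le_of_mem_pieceU1_of_mem_pieceU2 hp.1 hq, ?_⟩
    simpa [phi_of_mem_pieceU1 hp.1] using
      add_le_of_mem_pieceU1_of_mem_pieceV2 hp.1 (phi_mem_pieceV2 hq)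
  · refine ⟨add_le_of_mem_pieceU1_of_mem_pieceU3 hp.1 hq, ?_⟩
    simpa [phi_of_mem_pieceU1 hp.1] using
      add_le_of_mem_pieceU1_of_mem_pieceV3 hp.1 (phi_mem_pieceV3 hq)
  · refine ⟨add_le_of_mem_pieceU2_of_mem_pieceU3 hp hq, ?_⟩
    simpa using add_le_of_mem_pieceV2_of_mem_pieceV3 (phi_mem_pieceV2 hp) (phi_mem_pieceV3 hq)

end pieces

theorem phi_biLipschitz {k : ℕ} (hk : 4 ≤ k) {p q : ℝ³} (hp : p ∈ ExampleX1 k)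
    (hq : q ∈ ExampleX1 k) (hp1 : p 2 ≤ 1) (hq1 : q 2 ≤ 1) :
    ‖phi p - phi q‖ ≤ 72 * ‖p - q‖ ∧ ‖p - q‖ ≤ 72 * ‖phi p - phi q‖ := by
  obtain ⟨i, hpi⟩ := exists_mem_pieces hp hp1
  obtain ⟨j, hqj⟩ := exists_mem_pieces hq hq1
  have h := biLipschitz_of_separated_pieces (τ := fun x => x 2) (by norm_num : (0 : ℝ) ≤ 3)
    (fun _ _ hp _ hq => phi_biLipschitz_of_mem_pieces hp hq)
    (fun _ _ hp => norm_le_of_mem_pieces hk hp)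
    (fun _ _ hij _ hp _ hq => add_le_of_mem_pieces hij hp hq) hpi hqj
  rwa [show max (4 : ℝ) (3 * 24) = 72 by norm_num] at h

end Example1

open Example1

theorem example1_phi_biLipschitz (k : ℕ) (hk : 4 < k) :
    ∃ ε > (0 : ℝ), ∃ lam : ℝ, 1 ≤ lam ∧
      ∃ φ : EuclideanSpace ℝ (Fin 3) → EuclideanSpace ℝ (Fin 3),
        (∀ p ∈ PieceU1 k ∩ {p | 0 ≤ p 2 ∧ p 2 ≤ ε}, φ p = p) ∧
        (∀ p ∈ PieceU2 ∩ {p | 0 ≤ p 2 ∧ p 2 ≤ ε},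
          φ p 0 = p 0 ∧ φ p 1 = p 1 - p 2 / 2 ∧ φ p 2 = p 2) ∧
        (∀ p ∈ PieceU3 ∩ {p | 0 ≤ p 2 ∧ p 2 ≤ ε},
          φ p 0 = p 0 - 2 * p 2 ∧ φ p 1 = p 1 + p 2 / 2 ∧ φ p 2 = p 2) ∧
        Set.BijOn φ (ExampleX1 k ∩ {p | 0 ≤ p 2 ∧ p 2 ≤ ε})
          (ExampleX2 k ∩ {p | 0 ≤ p 2 ∧ p 2 ≤ ε}) ∧
        (∀ p ∈ ExampleX1 k ∩ {p | 0 ≤ p 2 ∧ p 2 ≤ ε},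
          ∀ q ∈ ExampleX1 k ∩ {p | 0 ≤ p 2 ∧ p 2 ≤ ε},
            lam⁻¹ * ‖p - q‖ ≤ ‖φ p - φ q‖ ∧ ‖φ p - φ q‖ ≤ lam * ‖p - q‖) := by
  have hlip : ∀ p ∈ ExampleX1 k ∩ {p | 0 ≤ p 2 ∧ p 2 ≤ 1},
      ∀ q ∈ ExampleX1 k ∩ {p | 0 ≤ p 2 ∧ p 2 ≤ 1},
        ‖phi p - phi q‖ ≤ 72 * ‖p - q‖ ∧ ‖p - q‖ ≤ 72 * ‖phi p - phi q‖ :=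
    fun p hp q hq => phi_biLipschitz hk.le hp.1 hq.1 hp.2.2 hq.2.2
  refine ⟨1, one_pos, 72, by norm_num, phi, fun p hp => phi_of_mem_pieceU1 hp.1,
    fun p hp => phi_apply_of_mem_pieceU2 hp.1, fun p hp => phi_apply_of_mem_pieceU3 hp.1,
    ⟨fun p hp => ⟨phi_mem_exampleX2 hp.1, by simpa using hp.2⟩, fun p hp q hq hpq => ?_,
      fun q hq => ?_⟩,
    fun p hp q hq => ⟨(inv_mul_le_iff₀ (by norm_num)).mpr (hlip p hp q hq).2, (hlip p hp q hq).1⟩⟩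
  · have h := (hlip p hp q hq).2
    rw [hpq, sub_self, norm_zero, mul_zero] at h
    exact sub_eq_zero.mp (norm_le_zero_iff.mp h)
  · obtain ⟨p, hp, rfl⟩ := exists_phi_eq hq.1
    exact ⟨p, ⟨hp, by simpa using hq.2⟩, rfl⟩
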